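/- (Inverse conversion formula.) Let q : ℝ → ℝ be a continuous function on the open half-line t > 0 with q(t) ≥ 0 for all t > 0, and suppose the integral g(t) = ∫₀ᵗ Aₙ(y/t) q(y) dy (where Aₙ(x) = ∫ₓ¹ (1−y)ⁿ/y dy) is finite for at least one value t = t₀ > 0. Then g is (n+2) times differentiable on the half-line t > 0, and q is recovered from g by the formula q(t) = d^{n+1}/dt^{n+1} ( t^{n+1} g′(t) / n! ) for all t > 0. -/

import Mathlib

open MeasureTheory Real Set Filter

/-- The kernel function `Aₙ(x) = ∫ₓ¹ (1−y)ⁿ/y dy`. -/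
noncomputable def A (n : ℕ) (x : ℝ) : ℝ := ∫ y in x..1, (1 - y) ^ n / y


lemma kernel_intble {n : ℕ} {a b : ℝ} (ha : 0 < a) (hb : 0 < b) :
    IntervalIntegrable (fun y => (1 - y) ^ n / y) volume a b := by
  apply ContinuousOn.intervalIntegrable
  apply ContinuousOn.div (by fun_prop) continuousOn_id
  intro y hy
  rcases Set.mem_uIcc.1 hy with h | h
  · exact ne_of_gt (lt_of_lt_of_le ha h.1)
  · exact ne_of_gt (lt_of_lt_of_le hb h.1)

lemma A_split {n : ℕ} {x x' : ℝ} (hx : 0 < x) (hx' : 0 < x') :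
    A n x = (∫ y in x..x', (1 - y) ^ n / y) + A n x' := by
  rw [A, A, intervalIntegral.integral_add_adjacent_intervals (kernel_intble hx hx')
    (kernel_intble hx' one_pos)]

lemma A_nonneg {n : ℕ} {x : ℝ} (hx : 0 < x) (hx1 : x ≤ 1) : 0 ≤ A n x := by
  apply intervalIntegral.integral_nonneg hx1
  intro u hu
  have hu0 : 0 < u := lt_of_lt_of_le hx hu.1
  have h1 : (0:ℝ) ≤ (1-u)^n := pow_nonneg (by linarith [hu.2]) n
  positivity

lemma A_mono {n : ℕ} {x x' : ℝ} (hx : 0 < x) (hxx : x ≤ x') (hx1 : x' ≤ 1) :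
    A n x' ≤ A n x := by
  rw [A_split hx (lt_of_lt_of_le hx hxx)]
  have : 0 ≤ ∫ y in x..x', (1 - y) ^ n / y := by
    apply intervalIntegral.integral_nonneg hxx
    intro u hu
    have hu0 : 0 < u := lt_of_lt_of_le hx hu.1
    have hu1 : u ≤ 1 := le_trans hu.2 hx1
    have : (0:ℝ) ≤ 1 - u := by linarith
    positivity
  linarith

lemma A_half_pos {n : ℕ} : 0 < A n (1/2) := by
  apply intervalIntegral.intervalIntegral_pos_of_pos_on (kernel_intble (by norm_num) one_pos)
  · intro u hu
    have h1 : (0:ℝ) < 1 - u := by linarith [hu.2]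
    have h2 : (0:ℝ) < u := by linarith [hu.1]
    positivity
  · norm_num

lemma A_log_bound {n : ℕ} {x : ℝ} (hx : 0 < x) (hx2 : x ≤ 1/2) :
    -Real.log x ≤ 2 ^ n * A n x + Real.log 2 := by
  have h1 : A n (1/2) ≥ 0 := A_nonneg (by norm_num) (by norm_num)
  have hsplit := A_split (n := n) hx (by norm_num : (0:ℝ) < 1/2)
  have h2 : ∫ y in x..(1/2 : ℝ), (2:ℝ)⁻¹ ^ n * y⁻¹ ≤ ∫ y in x..(1/2:ℝ), (1 - y) ^ n / y := by
    apply intervalIntegral.integral_mono_on hx2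
    · apply ContinuousOn.intervalIntegrable
      apply ContinuousOn.mul continuousOn_const
      apply ContinuousOn.inv₀ continuousOn_id
      intro u hu
      rw [Set.uIcc_of_le hx2] at hu
      exact ne_of_gt (lt_of_lt_of_le hx hu.1)
    · exact kernel_intble hx (by norm_num)
    · intro u hu
      have hu0 : 0 < u := lt_of_lt_of_le hx hu.1
      have h3 : (2:ℝ)⁻¹ ^ n ≤ (1 - u) ^ n := by
        apply pow_le_pow_left₀ (by norm_num)
        linarith [hu.2]
      rw [div_eq_mul_inv]
      gcongr
  have h4 : ∫ y in x..(1/2:ℝ), (2:ℝ)⁻¹ ^ n * y⁻¹ = 2⁻¹^n * (-Real.log 2 - Real.log x) := by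
    rw [intervalIntegral.integral_const_mul, integral_inv]
    · rw [Real.log_div (by norm_num) (ne_of_gt hx)]
      rw [show Real.log (1/2) = -Real.log 2 by rw [show (1:ℝ)/2 = 2⁻¹ by norm_num, Real.log_inv]]
    · intro h; rw [Set.uIcc_of_le hx2] at h; exact absurd h.1 (not_le.2 hx)
  rw [h4] at h2
  have hpow : (2:ℝ)^n * (2:ℝ)⁻¹^n = 1 := by
    rw [← mul_pow]; norm_num
  have hp2 : (0:ℝ) < 2 ^ n := pow_pos (by norm_num) n
  have h5 := mul_le_mul_of_nonneg_left h2 hp2.le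
  have h6 : (∫ (y : ℝ) in x..1 / 2, (1 - y) ^ n / y) ≤ A n x := by linarith
  have h7 := mul_le_mul_of_nonneg_left h6 hp2.le
  have hL : -Real.log 2 - Real.log x ≤ 2 ^ n * ∫ (y : ℝ) in x..1 / 2, (1 - y) ^ n / y := by
    calc -Real.log 2 - Real.log x = (2 ^ n * 2⁻¹ ^ n) * (-Real.log 2 - Real.log x) := by
          rw [hpow]; ring
      _ = 2 ^ n * (2⁻¹ ^ n * (-Real.log 2 - Real.log x)) := by ring
      _ ≤ _ := h5
  linarith

lemma A_formula {n : ℕ} {x : ℝ} (hx : 0 < x) :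
    A n x = -Real.log x
      + ∑ j ∈ Finset.range n, (-1 : ℝ) ^ (j + 1) * (n.choose (j + 1)) * ((1 - x ^ (j + 1)) / (j + 1)) := by
  have hmem : ∀ u ∈ Set.uIcc x 1, u ≠ 0 := by
    intro u hu
    rcases Set.mem_uIcc.1 hu with h | h
    · exact ne_of_gt (lt_of_lt_of_le hx h.1)
    · exact ne_of_gt (lt_of_lt_of_le one_pos h.1)
  have hint : ∀ u : ℝ, u ≠ 0 → (1 - u) ^ n / u
      = 1 / u + ∑ j ∈ Finset.range n, (-1 : ℝ) ^ (j + 1) * (n.choose (j + 1)) * u ^ j := by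
    intro u hu
    have hexp : (1 - u) ^ n = ∑ k ∈ Finset.range (n + 1), (-1 : ℝ) ^ k * u ^ k * (n.choose k) := by
      have := add_pow (-u) 1 n
      simp only [one_pow, mul_one] at this
      rw [sub_eq_add_neg, add_comm, this]
      exact Finset.sum_congr rfl fun k _ => by ring
    have h2 : ∀ j ∈ Finset.range n,
        (-1:ℝ)^(j+1) * u^(j+1) * (n.choose (j+1)) = ((-1:ℝ)^(j+1) * (n.choose (j+1)) * u^j) * u := by
      intro j _; ring
    rw [hexp, Finset.sum_range_succ' _ n, Finset.sum_congr rfl h2, ← Finset.sum_mul]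
    field_simp
    rw [Nat.choose_zero_right, Nat.cast_one]
    ring
  have h3 : A n x = ∫ u in x..1,
      (1 / u + ∑ j ∈ Finset.range n, (-1 : ℝ) ^ (j + 1) * (n.choose (j + 1)) * u ^ j) := by
    apply intervalIntegral.integral_congr
    intro u hu
    exact hint u (hmem u hu)
  have hI1 : IntervalIntegrable (fun u : ℝ => 1 / u) volume x 1 := by
    apply ContinuousOn.intervalIntegrable
    exact ContinuousOn.div continuousOn_const continuousOn_id hmem
  have hI2 : IntervalIntegrable
      (fun u : ℝ => ∑ j ∈ Finset.range n, (-1 : ℝ) ^ (j + 1) * (n.choose (j + 1)) * u ^ j)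
      volume x 1 := (Continuous.intervalIntegrable (by fun_prop) x 1)
  rw [h3, intervalIntegral.integral_add hI1 hI2, integral_one_div (by
    intro h
    exact (hmem 0 h) rfl), intervalIntegral.integral_finset_sum
    (fun j _ => (Continuous.intervalIntegrable (by fun_prop) x 1))]
  have : Real.log (1 / x) = -Real.log x := by
    rw [one_div, Real.log_inv]
  rw [this]
  congr 1
  apply Finset.sum_congr rfl
  intro j _
  rw [intervalIntegral.integral_const_mul, integral_pow]
  push_cast
  ring
noncomputable def Mo (q : ℝ → ℝ) (j : ℕ) (t : ℝ) : ℝ := ∫ y in Set.Ioc (0:ℝ) t, y ^ j * q y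
noncomputable def LL (q : ℝ → ℝ) (t : ℝ) : ℝ := ∫ y in Set.Ioc (0:ℝ) t, Real.log y * q y
noncomputable def GG (q : ℝ → ℝ) (m : ℕ) (t : ℝ) : ℝ := ∫ y in Set.Ioc (0:ℝ) t, (t - y) ^ m * q y

lemma extend_int {f : ℝ → ℝ} (hf : ContinuousOn f (Set.Ioi 0)) {b : ℝ} (hb : 0 < b)
    (hib : IntegrableOn f (Set.Ioc 0 b)) (a : ℝ) : IntegrableOn f (Set.Ioc 0 a) := by
  rcases le_or_gt a b with h | h
  · exact hib.mono_set (Set.Ioc_subset_Ioc_right h)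
  · have h1 : IntegrableOn f (Set.Icc b a) :=
      (hf.mono (fun y hy => lt_of_lt_of_le hb hy.1)).integrableOn_compact isCompact_Icc
    apply (hib.union h1).mono_set
    intro y hy
    rcases le_or_gt y b with h2 | h2
    · exact Or.inl ⟨hy.1, h2⟩
    · exact Or.inr ⟨h2.le, hy.2⟩

section core
variable {n : ℕ} {q : ℝ → ℝ} {t₀ : ℝ}

lemma q_int (hq_cont : ContinuousOn q (Set.Ioi 0)) (hq_nonneg : ∀ t > (0:ℝ), 0 ≤ q t)
    (ht₀ : 0 < t₀) (hfin : IntegrableOn (fun y => A n (y / t₀) * q y) (Set.Ioc 0 t₀))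
    (a : ℝ) : IntegrableOn q (Set.Ioc 0 a) := by
  have hb : (0:ℝ) < t₀ / 2 := by positivity
  apply extend_int hq_cont hb ?_ a
  have hc : 0 < A n (1/2) := A_half_pos
  have hd : Integrable (fun y => (A n (1/2))⁻¹ * (A n (y / t₀) * q y))
      (volume.restrict (Set.Ioc 0 (t₀/2))) :=
    (hfin.mono_set (Set.Ioc_subset_Ioc_right (by linarith))).const_mul _
  apply hd.mono ((hq_cont.mono (fun y hy => hy.1)).aestronglyMeasurable measurableSet_Ioc)
  filter_upwards [ae_restrict_mem measurableSet_Ioc] with y hy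
  have hy0 : 0 < y := hy.1
  have hq0 : 0 ≤ q y := hq_nonneg y hy0
  have hyt : y / t₀ ≤ 1/2 := by rw [div_le_iff₀ ht₀]; linarith [hy.2]
  have hA : A n (1/2) ≤ A n (y / t₀) := A_mono (by positivity) hyt (by norm_num)
  have hA0 : 0 ≤ A n (y / t₀) := le_trans hc.le hA
  rw [Real.norm_eq_abs, Real.norm_eq_abs, abs_of_nonneg hq0, abs_of_nonneg (by positivity)]
  calc q y = (A n (1/2))⁻¹ * (A n (1/2) * q y) := by field_simp
    _ ≤ (A n (1/2))⁻¹ * (A n (y / t₀) * q y) := by gcongr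

lemma mo_int (hq_cont : ContinuousOn q (Set.Ioi 0))
    (hqi : ∀ a : ℝ, IntegrableOn q (Set.Ioc 0 a)) (j : ℕ) {a : ℝ} (ha : 0 < a)
    (hq_nonneg : ∀ t > (0:ℝ), 0 ≤ q t) :
    IntegrableOn (fun y => y ^ j * q y) (Set.Ioc 0 a) := by
  have hd : Integrable (fun y => a ^ j * q y) (volume.restrict (Set.Ioc 0 a)) :=
    (hqi a).const_mul _
  apply hd.mono
  · apply ContinuousOn.aestronglyMeasurable ?_ measurableSet_Ioc
    exact ContinuousOn.mul (by fun_prop) (hq_cont.mono (fun y hy => hy.1))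
  · filter_upwards [ae_restrict_mem measurableSet_Ioc] with y hy
    have hy0 : 0 < y := hy.1
    have hq0 : 0 ≤ q y := hq_nonneg y hy0
    rw [Real.norm_eq_abs, Real.norm_eq_abs, abs_of_nonneg (by positivity),
      abs_of_nonneg (by positivity)]
    have : y ^ j ≤ a ^ j := pow_le_pow_left₀ hy0.le hy.2 j
    exact mul_le_mul_of_nonneg_right this hq0

lemma ll_int (hq_cont : ContinuousOn q (Set.Ioi 0)) (hq_nonneg : ∀ t > (0:ℝ), 0 ≤ q t)
    (ht₀ : 0 < t₀) (hfin : IntegrableOn (fun y => A n (y / t₀) * q y) (Set.Ioc 0 t₀))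
    (hqi : ∀ a : ℝ, IntegrableOn q (Set.Ioc 0 a))
    (a : ℝ) : IntegrableOn (fun y => Real.log y * q y) (Set.Ioc 0 a) := by
  set b := min (t₀/2) 1 with hbdef
  have hb : (0:ℝ) < b := by
    apply lt_min (by positivity) one_pos
  apply extend_int ?_ hb ?_ a
  · exact ContinuousOn.mul (Real.continuousOn_log.mono (fun y hy => ne_of_gt hy))
      hq_cont
  · have hd : Integrable (fun y => 2 ^ n * (A n (y / t₀) * q y)
        + (Real.log 2 + |Real.log t₀|) * q y) (volume.restrict (Set.Ioc 0 b)) := by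
      apply Integrable.add
      · exact ((hfin.mono_set (Set.Ioc_subset_Ioc_right (le_trans (min_le_left _ _)
          (by linarith)))).const_mul _)
      · exact (hqi b).const_mul _
    apply hd.mono
    · apply ContinuousOn.aestronglyMeasurable ?_ measurableSet_Ioc
      exact ContinuousOn.mul (Real.continuousOn_log.mono (fun y hy => ne_of_gt hy.1))
        (hq_cont.mono (fun y hy => hy.1))
    · filter_upwards [ae_restrict_mem measurableSet_Ioc] with y hy
      have hy0 : 0 < y := hy.1
      have hq0 : 0 ≤ q y := hq_nonneg y hy0
      have hy1 : y ≤ 1 := le_trans hy.2 (min_le_right _ _)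
      have hyt : y / t₀ ≤ 1/2 := by
        rw [div_le_iff₀ ht₀]
        have := le_trans hy.2 (min_le_left _ _)
        linarith
      have hxt : 0 < y / t₀ := by positivity
      have hA0 : 0 ≤ A n (y / t₀) := A_nonneg hxt (by linarith)
      have hlog : -Real.log (y / t₀) ≤ 2 ^ n * A n (y / t₀) + Real.log 2 :=
        A_log_bound hxt hyt
      rw [Real.log_div (ne_of_gt hy0) (ne_of_gt ht₀)] at hlog
      have hly : Real.log y ≤ 0 := Real.log_nonpos hy0.le hy1
      have hl2 : (0:ℝ) ≤ Real.log 2 := Real.log_nonneg (by norm_num)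
      have hrhs : (0:ℝ) ≤ 2 ^ n * (A n (y / t₀) * q y) + (Real.log 2 + |Real.log t₀|) * q y := by
        have h2n : (0:ℝ) ≤ 2 ^ n := by positivity
        have := abs_nonneg (Real.log t₀)
        nlinarith [mul_nonneg hA0 hq0]
      rw [Real.norm_eq_abs, Real.norm_eq_abs, abs_mul, abs_of_nonneg hq0,
        abs_of_nonpos hly, abs_of_nonneg hrhs]
      have h1 : -Real.log y ≤ 2 ^ n * A n (y / t₀) + Real.log 2 + |Real.log t₀| := by
        have := neg_abs_le (Real.log t₀)
        linarith
      calc -Real.log y * q y ≤ (2 ^ n * A n (y / t₀) + Real.log 2 + |Real.log t₀|) * q y :=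
            mul_le_mul_of_nonneg_right h1 hq0
        _ = 2 ^ n * (A n (y / t₀) * q y) + (Real.log 2 + |Real.log t₀|) * q y := by ring

end core
section deriv
variable {q : ℝ → ℝ}

lemma alt_sum_real (k : ℕ) (hk : k ≠ 0) :
    ∑ j ∈ Finset.range (k + 1), (-1:ℝ) ^ j * (k.choose j) = 0 := by
  have h := Int.alternating_sum_range_choose (n := k)
  rw [if_neg hk] at h
  have h2 : ((∑ j ∈ Finset.range (k+1), (-1:ℤ)^j * (k.choose j) : ℤ) : ℝ) = 0 := by
    rw [h]; norm_num
  push_cast at h2; exact h2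

lemma mo_hasDeriv (hq_cont : ContinuousOn q (Set.Ioi 0))
    (hq_nonneg : ∀ t > (0:ℝ), 0 ≤ q t)
    (hqi : ∀ a : ℝ, IntegrableOn q (Set.Ioc 0 a)) (j : ℕ) {t : ℝ} (ht : 0 < t) :
    HasDerivAt (Mo q j) (t ^ j * q t) t := by
  have hcont : ContinuousOn (fun y => y ^ j * q y) (Set.Ioi 0) :=
    ContinuousOn.mul (by fun_prop) hq_cont
  have hF : HasDerivAt (fun s => ∫ y in (0:ℝ)..s, y ^ j * q y) (t ^ j * q t) t := by
    apply intervalIntegral.integral_hasDerivAt_right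
    · rw [intervalIntegrable_iff_integrableOn_Ioc_of_le ht.le]
      exact mo_int hq_cont hqi j ht hq_nonneg
    · exact hcont.stronglyMeasurableAtFilter isOpen_Ioi t ht
    · exact hcont.continuousAt (Ioi_mem_nhds ht)
  apply hF.congr_of_eventuallyEq
  filter_upwards [Ioi_mem_nhds ht] with s hs
  rw [Mo, intervalIntegral.integral_of_le (le_of_lt hs)]

lemma ll_hasDeriv {n : ℕ} {t₀ : ℝ} (hq_cont : ContinuousOn q (Set.Ioi 0))
    (hq_nonneg : ∀ t > (0:ℝ), 0 ≤ q t) (ht₀ : 0 < t₀)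
    (hfin : IntegrableOn (fun y => A n (y / t₀) * q y) (Set.Ioc 0 t₀))
    (hqi : ∀ a : ℝ, IntegrableOn q (Set.Ioc 0 a)) {t : ℝ} (ht : 0 < t) :
    HasDerivAt (LL q) (Real.log t * q t) t := by
  have hcont : ContinuousOn (fun y => Real.log y * q y) (Set.Ioi 0) :=
    ContinuousOn.mul (Real.continuousOn_log.mono (fun y hy => ne_of_gt hy)) hq_cont
  have hF : HasDerivAt (fun s => ∫ y in (0:ℝ)..s, Real.log y * q y) (Real.log t * q t) t := by
    apply intervalIntegral.integral_hasDerivAt_right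
    · rw [intervalIntegrable_iff_integrableOn_Ioc_of_le ht.le]
      exact ll_int hq_cont hq_nonneg ht₀ hfin hqi t
    · exact hcont.stronglyMeasurableAtFilter isOpen_Ioi t ht
    · exact hcont.continuousAt (Ioi_mem_nhds ht)
  apply hF.congr_of_eventuallyEq
  filter_upwards [Ioi_mem_nhds ht] with s hs
  rw [LL, intervalIntegral.integral_of_le (le_of_lt hs)]

lemma gg_expand (hq_cont : ContinuousOn q (Set.Ioi 0))
    (hq_nonneg : ∀ t > (0:ℝ), 0 ≤ q t)
    (hqi : ∀ a : ℝ, IntegrableOn q (Set.Ioc 0 a)) (m : ℕ) (s : ℝ) :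
    GG q m s = ∑ j ∈ Finset.range (m + 1),
      ((-1:ℝ) ^ j * (m.choose j) * s ^ (m - j)) * Mo q j s := by
  rcases le_or_gt s 0 with h | h
  · have he : Set.Ioc (0:ℝ) s = ∅ := Set.Ioc_eq_empty (not_lt.2 h)
    simp [GG, Mo, he]
  · rw [GG]
    have hpt : Set.EqOn (fun y => (s - y) ^ m * q y)
        (fun y => ∑ j ∈ Finset.range (m + 1),
          ((-1:ℝ) ^ j * (m.choose j) * s ^ (m - j)) * (y ^ j * q y)) (Set.Ioc 0 s) := by
      intro y _
      have hexp : (s - y) ^ m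
          = ∑ j ∈ Finset.range (m + 1), (-y) ^ j * s ^ (m - j) * (m.choose j) := by
        rw [show s - y = -y + s by ring]
        exact add_pow (-y) s m
      simp only
      rw [hexp, Finset.sum_mul]
      apply Finset.sum_congr rfl
      intro j _
      rw [show (-y:ℝ)^j = (-1)^j * y^j by rw [neg_pow]]
      ring
    rw [setIntegral_congr_fun measurableSet_Ioc hpt,
      integral_finset_sum _ (fun j _ =>
        ((mo_int hq_cont hqi j h hq_nonneg).const_mul _))]
    apply Finset.sum_congr rfl
    intro j _
    rw [integral_const_mul]
    rfl

lemma gg_zero_hasDeriv (hq_cont : ContinuousOn q (Set.Ioi 0))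
    (hq_nonneg : ∀ t > (0:ℝ), 0 ≤ q t)
    (hqi : ∀ a : ℝ, IntegrableOn q (Set.Ioc 0 a)) {t : ℝ} (ht : 0 < t) :
    HasDerivAt (GG q 0) (q t) t := by
  have : GG q 0 = Mo q 0 := by
    funext s; rw [GG, Mo]; simp
  rw [this]
  simpa using mo_hasDeriv hq_cont hq_nonneg hqi 0 ht

lemma gg_succ_hasDeriv (hq_cont : ContinuousOn q (Set.Ioi 0))
    (hq_nonneg : ∀ t > (0:ℝ), 0 ≤ q t)
    (hqi : ∀ a : ℝ, IntegrableOn q (Set.Ioc 0 a)) (m : ℕ) {t : ℝ} (ht : 0 < t) :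
    HasDerivAt (GG q (m + 1)) ((m + 1) * GG q m t) t := by
  have hfun : GG q (m + 1) = fun s => ∑ j ∈ Finset.range (m + 2),
      ((-1:ℝ) ^ j * ((m+1).choose j)) * (s ^ (m + 1 - j) * Mo q j s) := by
    funext s
    rw [gg_expand hq_cont hq_nonneg hqi (m+1) s]
    exact Finset.sum_congr rfl fun j _ => by ring
  have hder : HasDerivAt (fun s => ∑ j ∈ Finset.range (m + 2),
      ((-1:ℝ) ^ j * ((m+1).choose j)) * (s ^ (m + 1 - j) * Mo q j s))
      (∑ j ∈ Finset.range (m + 2), ((-1:ℝ) ^ j * ((m+1).choose j)) *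
        ((↑(m + 1 - j) * t ^ (m + 1 - j - 1)) * Mo q j t
          + t ^ (m + 1 - j) * (t ^ j * q t))) t := by
    apply HasDerivAt.fun_sum
    intro j _
    exact ((hasDerivAt_pow (m + 1 - j) t).mul
      (mo_hasDeriv hq_cont hq_nonneg hqi j ht)).const_mul _
  rw [hfun]
  convert hder using 1
  -- now prove: (m+1) * GG q m t = the sum
  have hsum : ∀ j ∈ Finset.range (m + 2),
      ((-1:ℝ) ^ j * ((m+1).choose j)) *
        ((↑(m + 1 - j) * t ^ (m + 1 - j - 1)) * Mo q j t
          + t ^ (m + 1 - j) * (t ^ j * q t))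
      = ((-1:ℝ) ^ j * ((m+1).choose j) * (m + 1 - j : ℕ)) * (t ^ (m + 1 - j - 1) * Mo q j t)
        + ((-1:ℝ) ^ j * ((m+1).choose j)) * (t ^ (m + 1) * q t) := by
    intro j hj
    have hjle : j ≤ m + 1 := Nat.lt_succ_iff.1 (Finset.mem_range.1 hj)
    have hp : t ^ (m + 1 - j) * t ^ j = t ^ (m + 1) := by
      rw [← pow_add, Nat.sub_add_cancel hjle]
    calc ((-1:ℝ) ^ j * ((m+1).choose j)) *
        ((↑(m + 1 - j) * t ^ (m + 1 - j - 1)) * Mo q j t + t ^ (m + 1 - j) * (t ^ j * q t))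
        = ((-1:ℝ) ^ j * ((m+1).choose j) * (m + 1 - j : ℕ)) * (t ^ (m + 1 - j - 1) * Mo q j t)
          + ((-1:ℝ) ^ j * ((m+1).choose j)) * ((t ^ (m + 1 - j) * t ^ j) * q t) := by ring
      _ = _ := by rw [hp]
  rw [Finset.sum_congr rfl hsum, Finset.sum_add_distrib, ← Finset.sum_mul,
    alt_sum_real (m + 1) (Nat.succ_ne_zero m), zero_mul, add_zero]
  -- remaining: (m+1) * GG q m t = ∑ j ∈ range (m+2), c_j (m+1-j) t^(m-j) Mo j
  rw [Finset.sum_range_succ]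
  simp only [Nat.sub_self, Nat.cast_zero, mul_zero, zero_mul, add_zero]
  rw [gg_expand hq_cont hq_nonneg hqi m t, Finset.mul_sum]
  apply Finset.sum_congr rfl
  intro j hj
  have hjle : j ≤ m := Nat.lt_succ_iff.1 (Finset.mem_range.1 hj)
  have hchoose : ((m.choose j : ℝ)) * (m + 1) = ((m+1).choose j : ℝ) * ((m + 1 - j : ℕ)) := by
    exact_mod_cast congrArg (Nat.cast : ℕ → ℝ) (Nat.choose_mul_succ_eq m j)
  have he : m + 1 - j - 1 = m - j := by omega
  rw [he]
  linear_combination ((-1:ℝ)^j * t^(m-j) * Mo q j t) * hchoose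
section gderiv
variable {n : ℕ} {q g : ℝ → ℝ} {t₀ : ℝ}

lemma g_eq (hq_cont : ContinuousOn q (Set.Ioi 0)) (hq_nonneg : ∀ t > (0:ℝ), 0 ≤ q t)
    (ht₀ : 0 < t₀) (hfin : IntegrableOn (fun y => A n (y / t₀) * q y) (Set.Ioc 0 t₀))
    (hqi : ∀ a : ℝ, IntegrableOn q (Set.Ioc 0 a))
    (hg : ∀ s : ℝ, g s = ∫ y in Set.Ioc (0 : ℝ) s, A n (y / s) * q y)
    {s : ℝ} (hs : 0 < s) :
    g s = Real.log s * Mo q 0 s - LL q s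
      + ∑ j ∈ Finset.range n, ((-1:ℝ) ^ (j+1) * (n.choose (j+1)) / (j+1))
          * (Mo q 0 s - Mo q (j+1) s / s ^ (j+1)) := by
  have hsne : s ≠ 0 := ne_of_gt hs
  have hEq : Set.EqOn (fun y => A n (y / s) * q y)
      (fun y => (Real.log s * (y ^ 0 * q y) - Real.log y * q y)
        + ∑ j ∈ Finset.range n, ((-1:ℝ) ^ (j+1) * (n.choose (j+1)) / (j+1))
            * (y ^ 0 * q y - (y ^ (j+1) * q y) / s ^ (j+1))) (Set.Ioc 0 s) := by
    intro y hy
    have hy0 : 0 < y := hy.1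
    simp only
    rw [A_formula (div_pos hy0 hs), Real.log_div (ne_of_gt hy0) hsne, add_mul,
      Finset.sum_mul]
    congr 1
    · ring
    · apply Finset.sum_congr rfl
      intro j _
      have hj1 : ((j:ℝ) + 1) ≠ 0 := by positivity
      have hsp : (s:ℝ) ^ (j+1) ≠ 0 := pow_ne_zero _ hsne
      rw [div_pow]
      field_simp
  have i1 : Integrable (fun y => Real.log s * (y ^ 0 * q y))
      (volume.restrict (Set.Ioc 0 s)) := (mo_int hq_cont hqi 0 hs hq_nonneg).const_mul _
  have i2 : Integrable (fun y => Real.log y * q y) (volume.restrict (Set.Ioc 0 s)) :=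
    ll_int hq_cont hq_nonneg ht₀ hfin hqi s
  have i3 : ∀ j ∈ Finset.range n, Integrable
      (fun y => ((-1:ℝ) ^ (j+1) * (n.choose (j+1)) / (j+1))
        * (y ^ 0 * q y - (y ^ (j+1) * q y) / s ^ (j+1)))
      (volume.restrict (Set.Ioc 0 s)) := by
    intro j _
    exact (((mo_int hq_cont hqi 0 hs hq_nonneg).sub
      ((mo_int hq_cont hqi (j+1) hs hq_nonneg).div_const _)).const_mul _)
  have i12 : Integrable (fun y => Real.log s * (y ^ 0 * q y) - Real.log y * q y)
      (volume.restrict (Set.Ioc 0 s)) := i1.sub i2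
  have i3' : Integrable (fun y => ∑ j ∈ Finset.range n,
      ((-1:ℝ) ^ (j+1) * (n.choose (j+1)) / (j+1))
        * (y ^ 0 * q y - (y ^ (j+1) * q y) / s ^ (j+1)))
      (volume.restrict (Set.Ioc 0 s)) := integrable_finset_sum _ i3
  rw [hg s, setIntegral_congr_fun measurableSet_Ioc hEq,
    integral_add i12 i3', integral_sub i1 i2,
    integral_const_mul, integral_finset_sum _ i3]
  congr 1
  apply Finset.sum_congr rfl
  intro j _
  rw [integral_const_mul, integral_sub (mo_int hq_cont hqi 0 hs hq_nonneg)
    ((mo_int hq_cont hqi (j+1) hs hq_nonneg).div_const _), integral_div]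
  rfl

lemma g_hasDeriv (hq_cont : ContinuousOn q (Set.Ioi 0)) (hq_nonneg : ∀ t > (0:ℝ), 0 ≤ q t)
    (ht₀ : 0 < t₀) (hfin : IntegrableOn (fun y => A n (y / t₀) * q y) (Set.Ioc 0 t₀))
    (hqi : ∀ a : ℝ, IntegrableOn q (Set.Ioc 0 a))
    (hg : ∀ s : ℝ, g s = ∫ y in Set.Ioc (0 : ℝ) s, A n (y / s) * q y)
    {t : ℝ} (ht : 0 < t) :
    HasDerivAt g (GG q n t / t ^ (n+1)) t := by
  have htne : t ≠ 0 := ne_of_gt ht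
  have hM0 := mo_hasDeriv hq_cont hq_nonneg hqi 0 ht
  have h1 : HasDerivAt (fun s => Real.log s * Mo q 0 s)
      (t⁻¹ * Mo q 0 t + Real.log t * (t ^ 0 * q t)) t :=
    (Real.hasDerivAt_log htne).mul hM0
  have h2 := ll_hasDeriv hq_cont hq_nonneg ht₀ hfin hqi ht
  have h3 : ∀ j : ℕ, HasDerivAt (fun s => Mo q (j+1) s / s ^ (j+1))
      ((t ^ (j+1) * q t * t ^ (j+1) - Mo q (j+1) t * (↑(j+1) * t ^ (j+1-1))) / (t ^ (j+1)) ^ 2)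
      t := fun j =>
    (mo_hasDeriv hq_cont hq_nonneg hqi (j+1) ht).div (hasDerivAt_pow (j+1) t)
      (pow_ne_zero _ htne)
  have h4 : ∀ j ∈ Finset.range n, HasDerivAt
      (fun s => ((-1:ℝ) ^ (j+1) * (n.choose (j+1)) / (j+1)) * (Mo q 0 s - Mo q (j+1) s / s ^ (j+1)))
      (((-1:ℝ) ^ (j+1) * (n.choose (j+1)) / (j+1)) * ((t ^ 0 * q t)
        - (t ^ (j+1) * q t * t ^ (j+1) - Mo q (j+1) t * (↑(j+1) * t ^ (j+1-1))) / (t ^ (j+1)) ^ 2))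
      t := fun j _ => (hM0.sub (h3 j)).const_mul _
  have htotal := (h1.fun_sub h2).fun_add (HasDerivAt.fun_sum h4)
  have hgloc : g =ᶠ[nhds t] (fun s => Real.log s * Mo q 0 s - LL q s
      + ∑ j ∈ Finset.range n, ((-1:ℝ) ^ (j+1) * (n.choose (j+1)) / (j+1))
          * (Mo q 0 s - Mo q (j+1) s / s ^ (j+1))) :=
    Filter.eventuallyEq_of_mem (isOpen_Ioi.mem_nhds ht)
      (fun s hs => g_eq hq_cont hq_nonneg ht₀ hfin hqi hg hs)
  have hgd := htotal.congr_of_eventuallyEq hgloc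
  refine hgd.congr_deriv ?_
  symm
  -- value identity
  have hstep : ∀ j ∈ Finset.range n,
      ((-1:ℝ) ^ (j+1) * (n.choose (j+1)) / (j+1)) * ((t ^ 0 * q t)
        - (t ^ (j+1) * q t * t ^ (j+1) - Mo q (j+1) t * (↑(j+1) * t ^ (j+1-1))) / (t ^ (j+1)) ^ 2)
      = ((-1:ℝ) ^ (j+1) * (n.choose (j+1))) * (Mo q (j+1) t / t ^ (j+2)) := by
    intro j _
    have hj1 : ((j:ℝ) + 1) ≠ 0 := by positivity
    have : (j + 1 - 1 : ℕ) = j := rfl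
    rw [this]
    have hp : t ^ (j+1) ≠ 0 := pow_ne_zero _ htne
    have hp2 : t ^ (j+2) ≠ 0 := pow_ne_zero _ htne
    field_simp
    push_cast
    ring
  rw [gg_expand hq_cont hq_nonneg hqi n t, Finset.sum_range_succ' _ n]
  rw [add_div, Finset.sum_div]
  have hf0 : ((-1:ℝ) ^ 0 * (n.choose 0 : ℝ) * t ^ (n - 0)) * Mo q 0 t / t ^ (n+1)
      = t⁻¹ * Mo q 0 t := by
    simp only [pow_zero, Nat.choose_zero_right, Nat.cast_one, one_mul, Nat.sub_zero]
    rw [pow_succ]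
    field_simp
  have hfj : ∀ j ∈ Finset.range n,
      ((-1:ℝ) ^ (j+1) * ((n.choose (j+1)) : ℝ) * t ^ (n - (j+1))) * Mo q (j+1) t / t ^ (n+1)
      = ((-1:ℝ) ^ (j+1) * (n.choose (j+1))) * (Mo q (j+1) t / t ^ (j+2)) := by
    intro j hj
    have hjn : j + 1 ≤ n := Finset.mem_range.1 hj
    have hp : t ^ (n - (j+1)) * t ^ (j+2) = t ^ (n+1) := by
      rw [← pow_add]
      congr 1
      omega
    have hp1 : (t:ℝ) ^ (n+1) ≠ 0 := pow_ne_zero _ htne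
    have hp2 : (t:ℝ) ^ (j+2) ≠ 0 := pow_ne_zero _ htne
    rw [div_eq_iff hp1]
    calc ((-1:ℝ) ^ (j+1) * ((n.choose (j+1)) : ℝ) * t ^ (n - (j+1))) * Mo q (j+1) t
        = ((-1:ℝ) ^ (j+1) * (n.choose (j+1))) * (Mo q (j+1) t / t ^ (j+2))
            * (t ^ (n - (j+1)) * t ^ (j+2)) := by field_simp
      _ = _ := by rw [hp]
  rw [hf0, Finset.sum_congr rfl hfj, Finset.sum_congr rfl hstep]
  simp only [pow_zero, one_mul]
  ring

end gderiv
lemma iter_within_eq {s : Set ℝ} (hs : IsOpen s) (f : ℝ → ℝ) (k : ℕ) :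
    Set.EqOn (iteratedDerivWithin k f s) (iteratedDeriv k f) s := by
  induction k with
  | zero => intro x _; simp [iteratedDerivWithin_zero, iteratedDeriv_zero]
  | succ k ih =>
    intro x hx
    rw [iteratedDerivWithin_succ, derivWithin_of_isOpen hs hx,
      iteratedDeriv_succ]
    exact Filter.EventuallyEq.deriv_eq (Filter.eventuallyEq_of_mem (hs.mem_nhds hx) ih)

section smooth
variable {n : ℕ} {q g : ℝ → ℝ} {t₀ : ℝ}

lemma gg_contDiff (hq_cont : ContinuousOn q (Set.Ioi 0)) (hq_nonneg : ∀ t > (0:ℝ), 0 ≤ q t)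
    (hqi : ∀ a : ℝ, IntegrableOn q (Set.Ioc 0 a)) (m : ℕ) :
    ContDiffOn ℝ (m + 1 : ℕ) (GG q m) (Set.Ioi 0) := by
  induction m with
  | zero =>
    rw [show ((0 + 1 : ℕ) : WithTop ℕ∞) = (0 : WithTop ℕ∞) + 1 by norm_cast,
      contDiffOn_succ_iff_derivWithin isOpen_Ioi.uniqueDiffOn]
    refine ⟨fun x hx => ((gg_zero_hasDeriv hq_cont hq_nonneg hqi hx).differentiableAt).differentiableWithinAt,
      fun h => absurd h (by simp), ?_⟩
    rw [contDiffOn_zero]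
    apply ContinuousOn.congr hq_cont
    intro x hx
    rw [derivWithin_of_isOpen isOpen_Ioi hx, (gg_zero_hasDeriv hq_cont hq_nonneg hqi hx).deriv]
  | succ m ih =>
    rw [show ((m + 1 + 1 : ℕ) : WithTop ℕ∞) = ((m + 1 : ℕ) : WithTop ℕ∞) + 1 by norm_cast,
      contDiffOn_succ_iff_derivWithin isOpen_Ioi.uniqueDiffOn]
    refine ⟨fun x hx => ((gg_succ_hasDeriv hq_cont hq_nonneg hqi m hx).differentiableAt).differentiableWithinAt,
      fun h => absurd h (by simp), ?_⟩
    apply ContDiffOn.congr (contDiffOn_const.mul ih)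
    intro x hx
    rw [derivWithin_of_isOpen isOpen_Ioi hx,
      (gg_succ_hasDeriv hq_cont hq_nonneg hqi m hx).deriv]

lemma g_contDiff (hq_cont : ContinuousOn q (Set.Ioi 0)) (hq_nonneg : ∀ t > (0:ℝ), 0 ≤ q t)
    (ht₀ : 0 < t₀) (hfin : IntegrableOn (fun y => A n (y / t₀) * q y) (Set.Ioc 0 t₀))
    (hqi : ∀ a : ℝ, IntegrableOn q (Set.Ioc 0 a))
    (hg : ∀ s : ℝ, g s = ∫ y in Set.Ioc (0 : ℝ) s, A n (y / s) * q y) :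
    ContDiffOn ℝ (n + 2 : ℕ) g (Set.Ioi 0) := by
  rw [show ((n + 2 : ℕ) : WithTop ℕ∞) = ((n + 1 : ℕ) : WithTop ℕ∞) + 1 by norm_cast,
    contDiffOn_succ_iff_derivWithin isOpen_Ioi.uniqueDiffOn]
  refine ⟨fun x hx =>
    ((g_hasDeriv hq_cont hq_nonneg ht₀ hfin hqi hg hx).differentiableAt).differentiableWithinAt,
    fun h => absurd h (by simp), ?_⟩
  have hden : ContDiffOn ℝ (n + 1 : ℕ) (fun t : ℝ => t ^ (n+1)) (Set.Ioi 0) :=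
    (ContDiff.pow contDiff_id (n+1)).contDiffOn
  apply ContDiffOn.congr ((gg_contDiff hq_cont hq_nonneg hqi n).div hden
    (fun x hx => pow_ne_zero _ (ne_of_gt hx)))
  intro x hx
  rw [derivWithin_of_isOpen isOpen_Ioi hx,
    (g_hasDeriv hq_cont hq_nonneg ht₀ hfin hqi hg hx).deriv]
  rfl

end smooth
theorem stmt_7 (n : ℕ) (q g : ℝ → ℝ)
    (hq_cont : ContinuousOn q (Set.Ioi 0))
    (hq_nonneg : ∀ t > (0 : ℝ), 0 ≤ q t)
    (hg : ∀ s : ℝ, g s = ∫ y in Set.Ioc (0 : ℝ) s, A n (y / s) * q y)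
    (t₀ : ℝ) (ht₀ : 0 < t₀)
    (hfin : IntegrableOn (fun y => A n (y / t₀) * q y) (Set.Ioc 0 t₀)) :
    (∀ j < n + 2, ∀ t > (0 : ℝ), DifferentiableAt ℝ (iteratedDeriv j g) t) ∧
    (∀ t > (0 : ℝ),
      q t =
        iteratedDeriv (n + 1)
          (fun s => s ^ (n + 1) * deriv g s / (n.factorial : ℝ)) t) := by
  have hqi : ∀ a : ℝ, IntegrableOn q (Set.Ioc 0 a) :=
    fun a => q_int hq_cont hq_nonneg ht₀ hfin a
  have hfac : ((n.factorial : ℝ)) ≠ 0 := Nat.cast_ne_zero.2 n.factorial_ne_zero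
  constructor
  · intro j hj t ht
    have hC := g_contDiff hq_cont hq_nonneg ht₀ hfin hqi hg
    have hD : DifferentiableOn ℝ (iteratedDerivWithin j g (Set.Ioi 0)) (Set.Ioi 0) := by
      apply hC.differentiableOn_iteratedDerivWithin ?_ isOpen_Ioi.uniqueDiffOn
      exact_mod_cast hj
    have h1 : DifferentiableAt ℝ (iteratedDerivWithin j g (Set.Ioi 0)) t :=
      (hD t ht).differentiableAt (isOpen_Ioi.mem_nhds ht)
    exact (Filter.EventuallyEq.differentiableAt_iff
      (Filter.eventuallyEq_of_mem (isOpen_Ioi.mem_nhds ht)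
        (iter_within_eq isOpen_Ioi g j))).1 h1
  · intro t ht
    have hEqOn : Set.EqOn (fun s => s ^ (n + 1) * deriv g s / (n.factorial : ℝ))
        (fun s => GG q n s / (n.factorial : ℝ)) (Set.Ioi 0) := by
      intro s hs
      simp only
      rw [(g_hasDeriv hq_cont hq_nonneg ht₀ hfin hqi hg hs).deriv]
      have : (s:ℝ) ^ (n+1) ≠ 0 := pow_ne_zero _ (ne_of_gt hs)
      field_simp
    have claim : ∀ k, k ≤ n → ∀ u : ℝ, 0 < u →
        iteratedDeriv k (fun s => GG q n s / (n.factorial : ℝ)) u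
          = ((n.descFactorial k : ℝ) / n.factorial) * GG q (n - k) u := by
      intro k
      induction k with
      | zero =>
        intro _ u hu
        rw [iteratedDeriv_zero]
        simp only [Nat.descFactorial_zero, Nat.cast_one, Nat.sub_zero]
        ring
      | succ k ih =>
        intro hk u hu
        rw [iteratedDeriv_succ]
        have hev : iteratedDeriv k (fun s => GG q n s / (n.factorial : ℝ))
            =ᶠ[nhds u] (fun s => ((n.descFactorial k : ℝ) / n.factorial) * GG q (n - k) s) :=
          Filter.eventuallyEq_of_mem (isOpen_Ioi.mem_nhds hu)
            (fun v hv => ih (Nat.le_of_succ_le hk) v hv)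
        rw [hev.deriv_eq]
        have hnk : n - k = (n - (k+1)) + 1 := by omega
        have hder : HasDerivAt (GG q (n - k))
            (((n - (k+1) : ℕ) + 1 : ℝ) * GG q (n - (k+1)) u) u := by
          rw [hnk]
          exact_mod_cast gg_succ_hasDeriv hq_cont hq_nonneg hqi (n - (k+1)) hu
        rw [(hder.const_mul _).deriv, Nat.descFactorial_succ]
        have hcast : ((n - k : ℕ) : ℝ) = ((n - (k+1) : ℕ) : ℝ) + 1 := by
          exact_mod_cast congrArg (Nat.cast : ℕ → ℝ) hnk
        push_cast
        rw [hcast]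
        ring
    have h1 : iteratedDeriv (n+1) (fun s => GG q n s / (n.factorial : ℝ)) t = q t := by
      rw [iteratedDeriv_succ]
      have hev : iteratedDeriv n (fun s => GG q n s / (n.factorial : ℝ))
          =ᶠ[nhds t] GG q 0 := by
        apply Filter.eventuallyEq_of_mem (isOpen_Ioi.mem_nhds ht)
        intro v hv
        rw [claim n le_rfl v hv, Nat.descFactorial_self, Nat.sub_self, div_self hfac, one_mul]
      rw [hev.deriv_eq, (gg_zero_hasDeriv hq_cont hq_nonneg hqi ht).deriv]
    rw [Set.EqOn.iteratedDeriv_of_isOpen hEqOn isOpen_Ioi (n+1) ht, h1]
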